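/- Let A be a commutative unital R-algebra, D = (D₁,…,Dₙ) R-derivations of A, and P(ξ) = a₀ + Σ_{k=1}^d P_k(ξ) a polynomial over A with P_k homogeneous of degree k and P_d ≠ 0. If u ∈ A satisfies P(D)(u^m) = 0 for all 1 ≤ m ≤ d, then a₀·u^d = (-1)^d·d!·P_d(D₁u,…,Dₙu). -/

import Mathlib

/-!
Let `δ = ad (u·)` be the commutator with multiplication by `u` on `End_R A`. For a derivation
`D`, `δ D = -(D u)·` commutes with `u·`, so `δ` lowers the order of a differential operator by
one: `δ^k` kills products of fewer than `k` derivations and sends a product of exactly `k` of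
them to `k!` times the product of the `-(Dᵢ u)·`. Hence `δ^d P(D)` is multiplication by
`(-1)^d d! P_d(∇u)`. On the other hand, expanding `δ^d` binomially and evaluating at `1` gives
`∑ C(d,j) (-1)^j u^(d-j) P(D)(u^j)`, which by hypothesis reduces to `u^d P(D)(1) = a₀ u^d`.
-/

/-- The differential operator `P(D)` obtained from `P ∈ A[ξ₁,…,ξₙ]` by substituting the
derivations `Dᵢ` for `ξᵢ`, with the coefficients written on the left. -/
noncomputable def mvDiffOp {R A : Type*} [CommRing R] [CommRing A] [Algebra R A]
    {n : ℕ} (D : Fin n → Derivation R A A) (P : MvPolynomial (Fin n) A) :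
    Module.End R A :=
  ∑ m ∈ P.support,
    LinearMap.mulLeft R (P.coeff m) *
      ((List.finRange n).map fun i => (D i).toLinearMap ^ m i).prod

section Adjoint

attribute [local instance] LieRing.ofAssociativeRing

open LieAlgebra Finset

variable {R S : Type*} [CommRing R] [Ring S] [Algebra R S]

lemma LieAlgebra.ad_apply_mul (x a b : S) :
    ad R S x (a * b) = ad R S x a * b + a * ad R S x b := by
  simp only [ad_apply, Ring.lie_def, mul_sub, sub_mul, mul_assoc]
  abel

lemma LieAlgebra.ad_pow_apply_mul_of_commute {x a : S} (ha : Commute x a) (b : S) (N : ℕ) :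
    (ad R S x ^ N) (a * b) = a * (ad R S x ^ N) b := by
  induction N with
  | zero => rfl
  | succ N ih =>
    rw [pow_succ', Module.End.mul_apply, ih, ad_apply_mul, ad_apply, Ring.lie_def, ha.eq,
      sub_self, zero_mul, zero_add, ← Module.End.mul_apply, ← pow_succ']

lemma LieAlgebra.ad_pow_succ_apply_mul {x a : S} (ha : Commute x (ad R S x a)) (b : S) (N : ℕ) :
    (ad R S x ^ (N + 1)) (a * b) =
      a * (ad R S x ^ (N + 1)) b + (N + 1) • (ad R S x a * (ad R S x ^ N) b) := by
  have hca : ad R S x (ad R S x a) = 0 := by rw [ad_apply, Ring.lie_def, ha.eq, sub_self]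
  induction N with
  | zero =>
    rw [zero_add, pow_one, ad_apply_mul, pow_zero, one_smul, Module.End.one_apply, add_comm]
  | succ N ih =>
    rw [pow_succ' _ (N + 1), Module.End.mul_apply, ih, map_add, map_nsmul, ad_apply_mul,
      ad_apply_mul, hca, zero_mul, zero_add, ← Module.End.mul_apply, ← pow_succ',
      ← Module.End.mul_apply, ← pow_succ']
    module

lemma LieAlgebra.ad_pow_apply_list_prod_of_length_lt {x : S} {l : List S}
    (hl : ∀ a ∈ l, Commute x (ad R S x a)) {N : ℕ} (hN : l.length < N) :
    (ad R S x ^ N) l.prod = 0 := by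
  induction l generalizing N with
  | nil =>
    obtain ⟨N, rfl⟩ := Nat.exists_eq_add_of_lt hN
    rw [List.prod_nil, pow_succ, Module.End.mul_apply, ad_apply, Ring.lie_def, mul_one, one_mul,
      sub_self, map_zero]
  | cons a t ih =>
    obtain ⟨M, rfl⟩ := Nat.exists_eq_add_of_lt hN
    have ht : ∀ b ∈ t, Commute x (ad R S x b) := fun b hb => hl b (List.mem_cons_of_mem a hb)
    rw [List.length_cons] at hN ⊢
    rw [List.prod_cons, show t.length + 1 + M + 1 = (t.length + M + 1) + 1 by omega,
      ad_pow_succ_apply_mul (hl a List.mem_cons_self), ih ht (by omega), ih ht (by omega),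
      mul_zero, mul_zero, smul_zero, add_zero]

lemma LieAlgebra.ad_pow_length_apply_list_prod {x : S} {l : List S}
    (hl : ∀ a ∈ l, Commute x (ad R S x a)) :
    (ad R S x ^ l.length) l.prod = l.length.factorial • (l.map (ad R S x)).prod := by
  induction l with
  | nil => simp
  | cons a t ih =>
    have ht : ∀ b ∈ t, Commute x (ad R S x b) := fun b hb => hl b (List.mem_cons_of_mem a hb)
    rw [List.length_cons, List.prod_cons, ad_pow_succ_apply_mul (hl a List.mem_cons_self),
      ad_pow_apply_list_prod_of_length_lt ht (Nat.lt_succ_self _), mul_zero, zero_add, ih ht,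
      mul_smul_comm, smul_smul, List.map_cons, List.prod_cons, Nat.factorial_succ]

lemma LieAlgebra.ad_pow_apply_eq_sum (x y : S) (N : ℕ) :
    (ad R S x ^ N) y = ∑ ij ∈ antidiagonal N, N.choose ij.1 • (x ^ ij.1 * y * (-x) ^ ij.2) := by
  have hsplit : ad R S x = LinearMap.mulLeft R x + LinearMap.mulRight R (-x) := by
    ext y
    simp [Ring.lie_def, sub_eq_add_neg]
  rw [hsplit, (LinearMap.commute_mulLeft_right x (-x)).add_pow', LinearMap.sum_apply]
  simp [LinearMap.pow_mulLeft, LinearMap.pow_mulRight, mul_assoc]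

end Adjoint

section DifferentialOperator

attribute [local instance] LieRing.ofAssociativeRing

open LieAlgebra MvPolynomial Finset

variable {R A : Type*} [CommRing R] [CommRing A] [Algebra R A]

lemma LinearMap.commute_mulLeft (a b : A) :
    Commute (LinearMap.mulLeft R a) (LinearMap.mulLeft R b) :=
  (Commute.all a b).map (Algebra.lmul R A)

lemma LieAlgebra.ad_mulLeft_derivation (u : A) (D : Derivation R A A) :
    ad R (Module.End R A) (LinearMap.mulLeft R u) D = LinearMap.mulLeft R (-D u) := by
  ext f
  simp only [ad_apply, Ring.lie_def, LinearMap.sub_apply, Module.End.mul_apply,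
    Derivation.coeFn_coe, LinearMap.mulLeft_apply, Derivation.leibniz, smul_eq_mul]
  ring

lemma LieAlgebra.commute_ad_mulLeft_derivation (u : A) (D : Derivation R A A) :
    Commute (LinearMap.mulLeft R u) (ad R (Module.End R A) (LinearMap.mulLeft R u) D) := by
  rw [ad_mulLeft_derivation]
  exact LinearMap.commute_mulLeft u _

lemma LieAlgebra.ad_mulLeft_pow_apply_one {L : Module.End R A} {u : A} {d : ℕ}
    (h : ∀ m : ℕ, 1 ≤ m → m ≤ d → L (u ^ m) = 0) :
    ((ad R (Module.End R A) (LinearMap.mulLeft R u) ^ d) L) 1 = u ^ d * L 1 := by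
  rw [ad_pow_apply_eq_sum, LinearMap.sum_apply, sum_eq_single (d, 0)]
  · simp
  · rintro ⟨i, j⟩ hij hne
    rw [HasAntidiagonal.mem_antidiagonal] at hij
    have hj : j ≠ 0 := by
      rintro rfl
      exact hne (by simpa using hij)
    have hL : L ((-u) ^ j) = 0 := by
      rcases neg_one_pow_eq_or A j with hs | hs <;>
        simp [neg_pow, hs, h j (Nat.one_le_iff_ne_zero.mpr hj) (by omega)]
    have hneg : -LinearMap.mulLeft R u = LinearMap.mulLeft R (-u) := by ext; simp
    simp only [LinearMap.smul_apply, Module.End.mul_apply, hneg, LinearMap.pow_mulLeft,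
      LinearMap.mulLeft_apply, mul_one, hL, mul_zero, smul_zero]
  · simp

variable {n : ℕ} (D : Fin n → Derivation R A A)

noncomputable def monomialFactors (m : Fin n →₀ ℕ) : List (Module.End R A) :=
  (List.finRange n).flatMap fun i => List.replicate (m i) (D i).toLinearMap

lemma prod_monomialFactors (m : Fin n →₀ ℕ) :
    (monomialFactors D m).prod =
      ((List.finRange n).map fun i => (D i).toLinearMap ^ m i).prod := by
  simp [monomialFactors, List.flatMap, List.prod_flatten, Function.comp_def]

lemma length_monomialFactors (m : Fin n →₀ ℕ) : (monomialFactors D m).length = m.degree := by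
  simp [monomialFactors, Finsupp.degree_eq_sum, Fin.sum_univ_def]

lemma monomialFactors_zero : monomialFactors D 0 = [] :=
  List.eq_nil_of_length_eq_zero (by simp [length_monomialFactors])

lemma prod_map_ad_monomialFactors (u : A) (m : Fin n →₀ ℕ) :
    ((monomialFactors D m).map (ad R (Module.End R A) (LinearMap.mulLeft R u))).prod =
      LinearMap.mulLeft R ((-1) ^ m.degree * m.prod fun i k => D i u ^ k) := by
  simp only [monomialFactors, List.flatMap, List.map_flatten, List.map_map, List.prod_flatten,
    Function.comp_def, List.map_replicate, List.prod_replicate, ad_mulLeft_derivation,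
    LinearMap.pow_mulLeft]
  have hsign : (-1) ^ m.degree * (m.prod fun i k => D i u ^ k) =
      ((List.finRange n).map fun i => (-D i u) ^ m i).prod := by
    rw [← Fin.prod_univ_def, Finsupp.prod_pow, Finsupp.degree_eq_sum, ← prod_pow_eq_pow_sum,
      ← prod_mul_distrib]
    exact prod_congr rfl fun i _ => (neg_pow _ _).symm
  rw [hsign, show LinearMap.mulLeft R _ = Algebra.lmul R A _ from rfl, map_list_prod,
    List.map_map]
  rfl

lemma Module.End.list_prod_apply_eq_zero {M : Type*} [AddCommGroup M] [Module R M]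
    {l : List (Module.End R M)} {v : M} (hl : l ≠ []) (hv : ∀ f ∈ l, f v = 0) :
    l.prod v = 0 := by
  induction l with
  | nil => exact absurd rfl hl
  | cons f t ih =>
    rw [List.prod_cons, Module.End.mul_apply]
    rcases eq_or_ne t [] with rfl | ht
    · simpa using hv f List.mem_cons_self
    · rw [ih ht fun g hg => hv g (List.mem_cons_of_mem f hg), map_zero]

lemma prod_monomialFactors_apply_one {m : Fin n →₀ ℕ} (hm : m ≠ 0) :
    (monomialFactors D m).prod 1 = 0 := by
  refine Module.End.list_prod_apply_eq_zero ?_ ?_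
  · rw [← List.length_pos_iff, length_monomialFactors]
    exact Nat.pos_of_ne_zero (mt (Finsupp.degree_eq_zero_iff m).mp hm)
  · simp only [monomialFactors, List.mem_flatMap, List.mem_replicate]
    rintro f ⟨i, -, -, rfl⟩
    exact (D i).map_one_eq_zero

lemma mvDiffOp_eq_sum (P : MvPolynomial (Fin n) A) :
    mvDiffOp D P =
      ∑ m ∈ P.support, LinearMap.mulLeft R (P.coeff m) * (monomialFactors D m).prod := by
  simp only [mvDiffOp, prod_monomialFactors]

lemma mvDiffOp_apply_one (P : MvPolynomial (Fin n) A) : mvDiffOp D P 1 = P.coeff 0 := by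
  rw [mvDiffOp_eq_sum, LinearMap.sum_apply, sum_eq_single 0]
  · simp [monomialFactors_zero]
  · intro m _ hm
    rw [Module.End.mul_apply, prod_monomialFactors_apply_one D hm, map_zero]
  · intro h0
    simp [notMem_support_iff.mp h0]

lemma ad_mulLeft_pow_mvDiffOp {P : MvPolynomial (Fin n) A} {d : ℕ} (hdeg : P.totalDegree ≤ d)
    (u : A) :
    (ad R (Module.End R A) (LinearMap.mulLeft R u) ^ d) (mvDiffOp D P) =
      d.factorial • LinearMap.mulLeft R
        ((-1) ^ d * eval (fun i => D i u) (homogeneousComponent d P)) := by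
  have hlmul : ∀ a : A, LinearMap.mulLeft R a = Algebra.lmul R A a := fun _ => rfl
  have hterm : ∀ m ∈ P.support,
      (ad R (Module.End R A) (LinearMap.mulLeft R u) ^ d)
          (LinearMap.mulLeft R (P.coeff m) * (monomialFactors D m).prod) =
        if m.degree = d then
          d.factorial • LinearMap.mulLeft R
            ((-1) ^ d * (P.coeff m * m.prod fun i k => D i u ^ k))
        else 0 := by
    intro m hm
    have hcomm : ∀ a ∈ monomialFactors D m,
        Commute (LinearMap.mulLeft R u) (ad R (Module.End R A) (LinearMap.mulLeft R u) a) := by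
      simp only [monomialFactors, List.mem_flatMap, List.mem_replicate]
      rintro a ⟨i, -, -, rfl⟩
      exact commute_ad_mulLeft_derivation u (D i)
    rw [ad_pow_apply_mul_of_commute (LinearMap.commute_mulLeft u _)]
    split_ifs with hmd
    · rw [← hmd, ← length_monomialFactors D m, ad_pow_length_apply_list_prod hcomm,
        prod_map_ad_monomialFactors, length_monomialFactors, mul_smul_comm, hlmul, hlmul,
        hlmul, ← map_mul, mul_left_comm]
    · have hlt : (monomialFactors D m).length < d := by
        rw [length_monomialFactors]
        exact lt_of_le_of_ne ((le_totalDegree hm).trans hdeg) hmd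
      rw [ad_pow_apply_list_prod_of_length_lt hcomm hlt, mul_zero]
  rw [mvDiffOp_eq_sum, map_sum, sum_congr rfl hterm, ← sum_filter, homogeneousComponent_apply,
    map_sum, mul_sum, hlmul, map_sum, smul_sum]
  refine sum_congr rfl fun m _ => ?_
  rw [eval_monomial, hlmul]

end DifferentialOperator

theorem stmt3_general {R A : Type*} [CommRing R] [CommRing A] [Algebra R A]
    (n d : ℕ) (D : Fin n → Derivation R A A)
    (P : MvPolynomial (Fin n) A)
    (hdeg : P.totalDegree ≤ d)
    (u : A)
    (h : ∀ m : ℕ, 1 ≤ m → m ≤ d → mvDiffOp D P (u ^ m) = 0) :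
    P.coeff 0 * u ^ d =
      (-1 : A) ^ d * (Nat.factorial d : A) *
        MvPolynomial.eval (fun i => D i u) (MvPolynomial.homogeneousComponent d P) := by
  have key := LieAlgebra.ad_mulLeft_pow_apply_one (R := R) h
  rw [ad_mulLeft_pow_mvDiffOp D hdeg u, mvDiffOp_apply_one, LinearMap.smul_apply,
    LinearMap.mulLeft_apply, mul_one, nsmul_eq_mul] at key
  linear_combination -key

/-- Let `A` be a commutative unital `R`-algebra, `D = (D₁,…,Dₙ)` `R`-derivations of `A`,
and `P(ξ) = a₀ + ∑_{k=1}^d P_k(ξ)` over `A` with `P_k` homogeneous of degree `k` and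
`P_d ≠ 0` (`d ≥ 1`). If `P(D)(u^m) = 0` for all `1 ≤ m ≤ d`, then
`a₀ u^d = (-1)^d d! P_d(D₁u,…,Dₙu)`. -/
theorem stmt3 {R A : Type*} [CommRing R] [CommRing A] [Algebra R A]
    (n d : ℕ) (hd : 1 ≤ d) (D : Fin n → Derivation R A A)
    (P : MvPolynomial (Fin n) A)
    (hdeg : P.totalDegree ≤ d)
    (hPd : MvPolynomial.homogeneousComponent d P ≠ 0)
    (u : A)
    (h : ∀ m : ℕ, 1 ≤ m → m ≤ d → mvDiffOp D P (u ^ m) = 0) :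
    P.coeff 0 * u ^ d =
      (-1 : A) ^ d * (Nat.factorial d : A) *
        MvPolynomial.eval (fun i => D i u) (MvPolynomial.homogeneousComponent d P) :=
  stmt3_general n d D P hdeg u h
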